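/- arXiv:2410.21677 — 3 statements merged into one kernel-verified Lean document; each statement's English description precedes it below -/
import Mathlib

section
/- If f is isomorphic to g (i.e., for every nonempty finite subset X of the domain, the set of minimizers of f on X equals the set of minimizers of g on X), then for all points x1, x2, sign(f(x1) - f(x2)) = sign(g(x1) - g(x2)). -/
theorem isomorphism_implies_comparison_invariance
    {D : Type*} [Nonempty D] (f g : D → ℝ)
    (hiso : ∀ X : Finset D, X.Nonempty →
      {x | x ∈ X ∧ ∀ y ∈ X, f x ≤ f y} = {x | x ∈ X ∧ ∀ y ∈ X, g x ≤ g y}) :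
    ∀ x1 x2 : D, Real.sign (f x1 - f x2) = Real.sign (g x1 - g x2) := by
  classical
  have key : ∀ a b : D, (f a ≤ f b ↔ g a ≤ g b) := by
    intro a b
    have h := hiso {a, b} ⟨a, by simp⟩
    have ha := Set.ext_iff.mp h a
    simp only [Set.mem_setOf_eq, Finset.mem_insert, Finset.mem_singleton] at ha
    constructor
    · intro hfab
      have := ha.mp ⟨by simp, by rintro y (rfl | rfl) <;> simp [hfab]⟩
      exact this.2 b (by simp)
    · intro hgab
      have := ha.mpr ⟨by simp, by rintro y (rfl | rfl) <;> simp [hgab]⟩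
      exact this.2 b (by simp)
  intro x1 x2
  rcases lt_trichotomy (f x1) (f x2) with h | h | h
  · have hg : g x1 < g x2 := lt_of_not_ge fun hle => h.not_ge ((key x2 x1).mpr hle)
    rw [Real.sign_of_neg (by linarith), Real.sign_of_neg (by linarith)]
  · have h1 : g x1 ≤ g x2 := (key x1 x2).mp h.le
    have h2 : g x2 ≤ g x1 := (key x2 x1).mp h.ge
    have : g x1 = g x2 := le_antisymm h1 h2
    simp [h, this]
  · have hg : g x2 < g x1 := lt_of_not_ge fun hle => h.not_ge ((key x1 x2).mpr hle)
    rw [Real.sign_of_pos (by linarith), Real.sign_of_pos (by linarith)]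
end

section
/- If f and g are isomorphic functions on a domain D, then there exists a strictly monotonically increasing function h defined on the range of g such that f(x) = h(g(x)) for all x in D. -/
theorem isomorphic_implies_monotone_comp
    {D : Type*} [Nonempty D] (f g : D → ℝ)
    (hiso : ∀ x1 x2 : D, (f x1 < f x2 ↔ g x1 < g x2) ∧ (f x1 = f x2 ↔ g x1 = g x2)) :
    ∃ h : ℝ → ℝ,
      (∀ a ∈ Set.range g, ∀ b ∈ Set.range g, a < b → h a < h b) ∧
      (∀ x : D, f x = h (g x)) := by
  classical
  refine ⟨fun y => if hy : ∃ x, g x = y then f hy.choose else 0, ?_, ?_⟩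
  · rintro a ⟨x1, rfl⟩ b ⟨x2, rfl⟩ hab
    have h1 : ∃ x, g x = g x1 := ⟨x1, rfl⟩
    have h2 : ∃ x, g x = g x2 := ⟨x2, rfl⟩
    simp only [dif_pos h1, dif_pos h2]
    exact (hiso h1.choose h2.choose).1.mpr (by rw [h1.choose_spec, h2.choose_spec]; exact hab)
  · intro x
    have hx : ∃ x', g x' = g x := ⟨x, rfl⟩
    simp only [dif_pos hx]
    exact ((hiso x hx.choose).2.mpr hx.choose_spec.symm)
end

section
/- The IIA paradox for average-rank comparison: there exists performance data (given explicitly by the matrix in which algorithm A scores 1 on 100 problems and 99 on 400 problems, algorithm B scores 99 on 100 problems and 98 on 400 problems, and algorithm C1 scores 100 on all problems, with 96 further algorithms C_i scoring i on the first 100 problems and i-1 on the remaining 400) such that the average rank of A is smaller (better) than that of B when all 99 algorithms are ranked per problem, but the average rank of A is larger (worse) than that of B when only A, B, C1 are ranked per problem. -/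
open Classical in
/-- The score of algorithm `k` (0 = A, 1 = B, 2 = C1, k ≥ 3 = C_{k-1}) on problem `p`. -/
noncomputable def paradoxScore (k : Fin 99) (p : Fin 500) : ℝ :=
  if (p : ℕ) < 100 then
    if (k : ℕ) = 0 then 1
    else if (k : ℕ) = 1 then 99
    else if (k : ℕ) = 2 then 100
    else ((k : ℕ) - 1 : ℕ)
  else
    if (k : ℕ) = 0 then 99
    else if (k : ℕ) = 1 then 98
    else if (k : ℕ) = 2 then 100
    else ((k : ℕ) - 2 : ℕ)

open Classical in
/-- The rank of algorithm `X` within algorithm set `S` on problem `p`. -/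
noncomputable def paradoxRank (S : Finset (Fin 99)) (X : Fin 99) (p : Fin 500) : ℝ :=
  1 + (S.filter (fun Y => paradoxScore Y p < paradoxScore X p)).card

noncomputable def paradoxAvgRank (S : Finset (Fin 99)) (X : Fin 99) : ℝ :=
  (∑ p : Fin 500, paradoxRank S X p) / 500

/-- Natural-number version of the score; `b` says whether `p < 100`. -/
def natScore (k : Fin 99) (b : Bool) : ℕ :=
  if b then
    if (k : ℕ) = 0 then 1
    else if (k : ℕ) = 1 then 99
    else if (k : ℕ) = 2 then 100
    else (k : ℕ) - 1
  else
    if (k : ℕ) = 0 then 99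
    else if (k : ℕ) = 1 then 98
    else if (k : ℕ) = 2 then 100
    else (k : ℕ) - 2

lemma paradoxScore_eq (k : Fin 99) (p : Fin 500) :
    paradoxScore k p = (natScore k (decide ((p : ℕ) < 100)) : ℝ) := by
  unfold paradoxScore natScore
  by_cases h : (p : ℕ) < 100 <;> simp [h] <;> split_ifs <;> norm_num

lemma paradoxRank_eq (S : Finset (Fin 99)) (X : Fin 99) (p : Fin 500) :
    paradoxRank S X p =
      1 + ((S.filter (fun Y =>
        natScore Y (decide ((p : ℕ) < 100)) < natScore X (decide ((p : ℕ) < 100)))).card : ℝ) := by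
  unfold paradoxRank
  have h : S.filter (fun Y => paradoxScore Y p < paradoxScore X p)
      = S.filter (fun Y =>
          natScore Y (decide ((p : ℕ) < 100)) < natScore X (decide ((p : ℕ) < 100))) := by
    ext Y
    simp [Finset.mem_filter, paradoxScore_eq, Nat.cast_lt]
  rw [h]

set_option maxRecDepth 10000 in
lemma sum_if (a b : ℝ) :
    ∑ p : Fin 500, (if (p : ℕ) < 100 then a else b) = 100 * a + 400 * b := by
  rw [Finset.sum_ite]
  rw [Finset.sum_const, Finset.sum_const]
  have h1 : (Finset.univ.filter (fun p : Fin 500 => (p : ℕ) < 100)).card = 100 := by decide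
  have h2 : (Finset.univ.filter (fun p : Fin 500 => ¬ (p : ℕ) < 100)).card = 400 := by decide
  rw [h1, h2]
  push_cast
  ring

lemma rank_eval (S : Finset (Fin 99)) (X : Fin 99) (p : Fin 500)
    (c1 c2 : ℕ)
    (h1 : (S.filter (fun Y => natScore Y true < natScore X true)).card = c1)
    (h2 : (S.filter (fun Y => natScore Y false < natScore X false)).card = c2) :
    paradoxRank S X p = if (p : ℕ) < 100 then (1 + c1 : ℝ) else (1 + c2 : ℝ) := by
  rw [paradoxRank_eq]
  by_cases h : (p : ℕ) < 100 <;> simp [h, h1, h2]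

theorem iia_paradox_average_rank :
    paradoxAvgRank Finset.univ 0 < paradoxAvgRank Finset.univ 1 ∧
    paradoxAvgRank {0, 1, 2} 1 < paradoxAvgRank {0, 1, 2} 0 := by
  have hAfull : ∀ p, paradoxRank Finset.univ 0 p = if (p : ℕ) < 100 then (1:ℝ) else 98 := by
    intro p
    have := rank_eval Finset.univ 0 p 0 97 (by decide) (by decide)
    rw [this]; split_ifs <;> norm_num
  have hBfull : ∀ p, paradoxRank Finset.univ 1 p = if (p : ℕ) < 100 then (98:ℝ) else 97 := by
    intro p
    have := rank_eval Finset.univ 1 p 97 96 (by decide) (by decide)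
    rw [this]; split_ifs <;> norm_num
  have hArest : ∀ p, paradoxRank {0, 1, 2} 0 p = if (p : ℕ) < 100 then (1:ℝ) else 2 := by
    intro p
    have := rank_eval {0, 1, 2} 0 p 0 1 (by decide) (by decide)
    rw [this]; split_ifs <;> norm_num
  have hBrest : ∀ p, paradoxRank {0, 1, 2} 1 p = if (p : ℕ) < 100 then (2:ℝ) else 1 := by
    intro p
    have := rank_eval {0, 1, 2} 1 p 1 0 (by decide) (by decide)
    rw [this]; split_ifs <;> norm_num
  constructor
  · unfold paradoxAvgRank
    rw [Finset.sum_congr rfl (fun p _ => hAfull p),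
        Finset.sum_congr rfl (fun p _ => hBfull p), sum_if, sum_if]
    norm_num
  · unfold paradoxAvgRank
    rw [Finset.sum_congr rfl (fun p _ => hBrest p),
        Finset.sum_congr rfl (fun p _ => hArest p), sum_if, sum_if]
    norm_num
end
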